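/- arXiv:2102.01379 — 2 statements merged into one kernel-verified Lean document; each statement's English description precedes it below -/
import Mathlib

section
/- Let α be a positive integer and β a nonnegative integer with β < α, and let {a_m}_{m≥1} be an arbitrary sequence of complex numbers. Then the formal power series identity ∑_{n≥1} A(a,α,β;n)·qⁿ = ( ∏_{j≥1} (1+q^j)/(1−q^j) ) · ∑_{n≥1} a_n·q^{αn−β}/(1−q^{αn−β}) holds. -/
/-- An overpartition of `n`: a pair consisting of a multiset of overlined parts (pairwise
distinct) and a multiset of non-overlined parts, all parts positive, with total sum `n`. -/
structure Overpartition (n : ℕ) where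
  overlined : Multiset ℕ
  nonoverlined : Multiset ℕ
  overlined_nodup : overlined.Nodup
  overlined_pos : ∀ i ∈ overlined, 0 < i
  nonoverlined_pos : ∀ i ∈ nonoverlined, 0 < i
  parts_sum : overlined.sum + nonoverlined.sum = n

/-- There are only finitely many overpartitions of `n`. -/
instance (n : ℕ) : Finite (Overpartition n) := by
  classical
  set big : Multiset ℕ := n • ((Multiset.range (n + 1))) with hbig
  have key : ∀ (m : Multiset ℕ), (∀ i ∈ m, 0 < i) → m.sum ≤ n → m ≤ big := by
    intro m hpos hsum
    rw [Multiset.le_iff_count]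
    intro a
    rw [hbig, Multiset.count_nsmul]
    by_cases ha : a ∈ m
    · have ha1 : 0 < a := hpos a ha
      have hale : a ≤ m.sum := Multiset.le_sum_of_mem ha
      have hcard : m.card ≤ m.sum := by
        have := Multiset.card_nsmul_le_sum (s := m) (a := 1) (fun i hi => hpos i hi)
        simpa using this
      have hcnt : m.count a ≤ m.card := Multiset.count_le_card a m
      have haa : a ∈ Multiset.range (n + 1) := Multiset.mem_range.2 (by omega)
      have h1 : Multiset.count a (Multiset.range (n + 1)) = 1 :=
        Multiset.count_eq_one_of_mem (Multiset.nodup_range _) haa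
      rw [h1]
      omega
    · simp [Multiset.count_eq_zero_of_notMem ha]
  have hinj : Function.Injective (fun o : Overpartition n =>
      ((⟨o.overlined, Multiset.mem_powerset.2
          (key _ o.overlined_pos (by have := o.parts_sum; omega))⟩,
        ⟨o.nonoverlined, Multiset.mem_powerset.2
          (key _ o.nonoverlined_pos (by have := o.parts_sum; omega))⟩) :
        {m // m ∈ big.powerset} × {m // m ∈ big.powerset})) := by
    intro a b h
    cases a; cases b
    simp_all
  exact Finite.of_injective _ hinj

/-- `S k n`: the total number of non-overlined parts equal to `k`, counted with
multiplicity, in all the overpartitions of `n`. -/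
noncomputable def S (k n : ℕ) : ℕ := ∑ᶠ o : Overpartition n, o.nonoverlined.count k

/-- `pbar n`: the number of overpartitions of `n` (`pbar 0 = 1`). -/
noncomputable def pbar (n : ℕ) : ℕ := Nat.card (Overpartition n)

/-- The multiset of all parts (overlined and non-overlined) of an overpartition. -/
def Overpartition.parts {n : ℕ} (o : Overpartition n) : Multiset ℕ :=
  o.overlined + o.nonoverlined

/-- `Mbar k n`: the number of overpartitions of `n` in which the first (i.e. largest) part
larger than `k` appears at least `k + 1` times. -/
noncomputable def Mbar (k n : ℕ) : ℕ :=
  Nat.card {o : Overpartition n // ∃ s ∈ o.parts, k < s ∧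
    (∀ t ∈ o.parts, k < t → t ≤ s) ∧ k + 1 ≤ o.parts.count s}

/-- `A a α β n = ∑_{k ≥ 1} S(αk - β, n) * a k`. -/
noncomputable def A (a : ℕ → ℂ) (α β n : ℕ) : ℂ :=
  ∑ᶠ k ∈ Set.Ici 1, (S (α * k - β) n : ℂ) * a k

/-- `A` extended to integer arguments: terms with negative argument are zero. -/
noncomputable def Az (a : ℕ → ℂ) (α β : ℕ) (m : ℤ) : ℂ :=
  if 0 ≤ m then A a α β m.toNat else 0

/-- `B a α β n = ∑_{d ≥ 1, (αd - β) ∣ n} a d`. -/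
noncomputable def B (a : ℕ → ℂ) (α β n : ℕ) : ℂ :=
  ∑ᶠ d ∈ {d : ℕ | 1 ≤ d ∧ (α * d - β) ∣ n}, a d

/-- The formal power series `∏_{j ≥ 1} (1 + q^j)/(1 - q^j)`.  Since the `j`-th factor is
`1 + (terms of order ≥ j)`, the `n`-th coefficient of the infinite product equals the
`n`-th coefficient of the partial product over `1 ≤ j ≤ n`, which we take as definition. -/
noncomputable def overGF : PowerSeries ℂ :=
  PowerSeries.mk fun n =>
    PowerSeries.coeff n
      (∏ j ∈ Finset.Icc 1 n, (1 + PowerSeries.X ^ j) * (1 - PowerSeries.X ^ j)⁻¹)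

/-- The generalized Lambert series `∑_{m ≥ 1} a m * q^(αm-β)/(1 - q^(αm-β))` as a formal
power series; since the `m`-th summand has order `αm - β ≥ m`, each coefficient of the
infinite sum is the (finitely supported) sum of the corresponding coefficients. -/
noncomputable def lambertGF (a : ℕ → ℂ) (α β : ℕ) : PowerSeries ℂ :=
  PowerSeries.mk fun n =>
    ∑ᶠ m ∈ Set.Ici 1, PowerSeries.coeff n
      (PowerSeries.C (a m) * PowerSeries.X ^ (α * m - β)
        * (1 - PowerSeries.X ^ (α * m - β))⁻¹)

/-!
Overlined parts form a partition into distinct parts and non-overlined parts an ordinary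
partition, so `∏ (1 + q^j)/(1 - q^j) = ∑ pbar(n) qⁿ`. An overpartition of `n` with at least `t`
non-overlined parts equal to `k` is an overpartition of `n - tk` with `t` copies of `k` added,
hence `S(k, n) = ∑_{t ≥ 1} pbar(n - tk)`, which is the `n`-th coefficient of
`(∑ pbar(n) qⁿ) · qᵏ/(1 - qᵏ)`. Summing over `k = αm - β` with weights `a m` gives the identity;
`αm - β ≥ m` keeps every coefficient a finite sum.
-/

open Finset PowerSeries
open scoped PowerSeries.WithPiTopology

namespace PowerSeries

variable {R : Type*} [CommRing R]

theorem X_pow_dvd_prod_sub_one {ι : Type*} {f : ι → R⟦X⟧} {s : Finset ι} {n : ℕ}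
    (h : ∀ i ∈ s, X ^ n ∣ f i - 1) : X ^ n ∣ ∏ i ∈ s, f i - 1 := by
  rw [← Ideal.mem_span_singleton, ← Ideal.Quotient.eq, map_prod, map_one]
  exact prod_eq_one fun i hi ↦ Ideal.Quotient.eq.2 (Ideal.mem_span_singleton.2 (h i hi))

theorem coeff_eq_coeff_prod_of_hasProd [TopologicalSpace R] [T2Space R] {ι : Type*}
    {f : ι → R⟦X⟧} {g : R⟦X⟧} (hf : HasProd f g) (n : ℕ) (s : Finset ι)
    (hs : ∀ i ∉ s, X ^ (n + 1) ∣ f i - 1) : coeff n g = coeff n (∏ i ∈ s, f i) := by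
  classical
  refine tendsto_nhds_unique ((WithPiTopology.tendsto_iff_coeff_tendsto R _ _ _).1 hf n)
    (tendsto_atTop_of_eventually_const (i₀ := s) fun t hst ↦ ?_)
  obtain ⟨h, hh⟩ := X_pow_dvd_prod_sub_one (s := t \ s) fun i hi ↦ hs i (mem_sdiff.1 hi).2
  rw [← prod_sdiff hst, sub_eq_iff_eq_add'.1 hh, add_mul, one_mul, map_add, mul_assoc,
    coeff_X_pow_mul', if_neg (by omega), add_zero]

theorem coeff_mul_congr_right {n : ℕ} (f : R⟦X⟧) {g g' : R⟦X⟧}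
    (h : ∀ j ≤ n, coeff j g = coeff j g') : coeff n (f * g) = coeff n (f * g') := by
  simp_rw [coeff_mul]
  refine sum_congr rfl fun ij hij ↦ ?_
  rw [h ij.2 (by rw [HasAntidiagonal.mem_antidiagonal] at hij; omega)]

variable {K : Type*} [Field K] {d : ℕ}

theorem X_pow_dvd_one_add_mul_inv_one_sub_sub_one (k : ℕ) :
    X ^ (k + 1) ∣ (1 + X ^ (k + 1) : K⟦X⟧) * (1 - X ^ (k + 1))⁻¹ - 1 := by
  have h : (1 - X ^ (k + 1) : K⟦X⟧) * (1 - X ^ (k + 1))⁻¹ = 1 :=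
    PowerSeries.mul_inv_cancel _ (by simp)
  exact ⟨2 * (1 - X ^ (k + 1))⁻¹, by linear_combination h⟩

theorem X_pow_mul_inv_one_sub_X_pow_eq (hd : 0 < d) (N : ℕ) :
    (X ^ d * (1 - X ^ d)⁻¹ : K⟦X⟧)
      = ∑ t ∈ range N, X ^ ((t + 1) * d) + X ^ ((N + 1) * d) * (1 - X ^ d)⁻¹ := by
  have hinv : (1 - X ^ d : K⟦X⟧) * (1 - X ^ d)⁻¹ = 1 :=
    PowerSeries.mul_inv_cancel _ (by simp [zero_pow hd.ne'])
  have hgeom := mul_neg_geom_sum (X ^ d : K⟦X⟧) N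
  simp_rw [pow_mul', pow_succ', ← mul_sum]
  linear_combination (X ^ d * ∑ t ∈ range N, (X ^ d) ^ t) * hinv
    - (X ^ d * (1 - X ^ d)⁻¹) * hgeom

theorem coeff_mul_X_pow_mul_inv_one_sub_X_pow (hd : 0 < d) (F : K⟦X⟧) (n : ℕ) :
    coeff n (F * (X ^ d * (1 - X ^ d)⁻¹))
      = ∑ t ∈ range n, if (t + 1) * d ≤ n then coeff (n - (t + 1) * d) F else 0 := by
  have htail : coeff n (F * (X ^ ((n + 1) * d) * (1 - X ^ d)⁻¹)) = 0 := by
    rw [mul_left_comm, coeff_X_pow_mul', if_neg (by nlinarith)]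
  rw [X_pow_mul_inv_one_sub_X_pow_eq hd n, mul_add, map_add, htail, add_zero, mul_sum, map_sum]
  simp_rw [coeff_mul_X_pow']

end PowerSeries

namespace Nat.Partition

theorem hasProd_powerSeriesMk_card_distincts (R : Type*) [CommSemiring R] [TopologicalSpace R]
    [IsTopologicalSemiring R] [T2Space R] :
    HasProd (fun i ↦ (1 + X ^ (i + 1) : R⟦X⟧)) (PowerSeries.mk fun n ↦ (#(distincts n) : R)) := by
  simpa [← countRestricted_two, sum_range_succ] using
    hasProd_powerSeriesMk_card_countRestricted R (m := 2) (by norm_num)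

theorem hasProd_powerSeriesMk_card (K : Type*) [Field K] [TopologicalSpace K]
    [IsTopologicalRing K] [T2Space K] :
    HasProd (fun i ↦ (1 - X ^ (i + 1) : K⟦X⟧)⁻¹)
      (PowerSeries.mk fun n ↦ (Fintype.card n.Partition : K)) := by
  have geom (i : ℕ) : (1 - X ^ (i + 1) : K⟦X⟧)⁻¹ = ∑' j, X ^ ((i + 1) * j) := by
    rw [PowerSeries.inv_eq_iff_mul_eq_one (by simp)]
    simp_rw [pow_mul]
    exact WithPiTopology.tsum_pow_mul_one_sub_of_constantCoeff_eq_zero (by simp)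
  simpa [geom, restricted] using hasProd_powerSeriesMk_card_restricted K (fun _ ↦ True)

end Nat.Partition

theorem Multiset.sum_sub_replicate_add_mul {s : Multiset ℕ} {t d : ℕ} (h : t ≤ s.count d) :
    (s - replicate t d).sum + t * d = s.sum := by
  rw [← smul_eq_mul, ← sum_replicate, ← sum_add,
    tsub_add_cancel_of_le (le_count_iff_replicate_le.1 h)]

namespace Overpartition

variable {n d t : ℕ}

noncomputable instance : Fintype (Overpartition n) := Fintype.ofFinite _

@[ext]
theorem ext {o₁ o₂ : Overpartition n} (h₁ : o₁.overlined = o₂.overlined)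
    (h₂ : o₁.nonoverlined = o₂.nonoverlined) : o₁ = o₂ := by
  cases o₁; cases o₂; congr

def equivSigmaAntidiagonal (n : ℕ) : Overpartition n ≃
    Σ ij : antidiagonal n, {p : ij.1.1.Partition // p.parts.Nodup} × ij.1.2.Partition where
  toFun o := ⟨⟨(o.overlined.sum, o.nonoverlined.sum), mem_antidiagonal.2 o.parts_sum⟩,
    ⟨⟨o.overlined, o.overlined_pos _, rfl⟩, o.overlined_nodup⟩,
    ⟨o.nonoverlined, o.nonoverlined_pos _, rfl⟩⟩
  invFun x := ⟨x.2.1.1.parts, x.2.2.parts, x.2.1.2, fun _ ↦ x.2.1.1.parts_pos,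
    fun _ ↦ x.2.2.parts_pos, by
      rw [x.2.1.1.parts_sum, x.2.2.parts_sum]; exact mem_antidiagonal.1 x.1.2⟩
  left_inv _ := rfl
  right_inv := by
    rintro ⟨⟨⟨i, j⟩, h⟩, ⟨⟨p, hp, hpi⟩, hnodup⟩, ⟨q, hq, hqj⟩⟩
    obtain rfl : i = p.sum := hpi.symm
    obtain rfl : j = q.sum := hqj.symm
    rfl

theorem pbar_eq_sum_antidiagonal (n : ℕ) :
    pbar n = ∑ ij ∈ antidiagonal n,
      #(Nat.Partition.distincts ij.1) * Fintype.card ij.2.Partition := by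
  rw [pbar, Nat.card_congr (equivSigmaAntidiagonal n), Nat.card_eq_fintype_card,
    Fintype.card_sigma, ← sum_coe_sort (antidiagonal n)]
  simp [Fintype.card_prod, Fintype.card_subtype, Nat.Partition.distincts]

theorem mul_le_of_le_count (o : Overpartition n) (h : t ≤ o.nonoverlined.count d) :
    t * d ≤ n := by
  have := Multiset.sum_sub_replicate_add_mul h
  have := o.parts_sum
  omega

def addCopies (hd : 0 < d) (h : t * d ≤ n) :
    Overpartition (n - t * d) ≃ {o : Overpartition n // t ≤ o.nonoverlined.count d} where
  toFun o := ⟨⟨o.overlined, o.nonoverlined + Multiset.replicate t d, o.overlined_nodup,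
      o.overlined_pos, fun i hi ↦ (Multiset.mem_add.1 hi).elim (o.nonoverlined_pos i)
        fun hi ↦ Multiset.eq_of_mem_replicate hi ▸ hd, by
      rw [Multiset.sum_add, Multiset.sum_replicate, smul_eq_mul, ← add_assoc, o.parts_sum]
      omega⟩,
    by simp⟩
  invFun o := ⟨o.1.overlined, o.1.nonoverlined - Multiset.replicate t d, o.1.overlined_nodup,
    o.1.overlined_pos, fun i hi ↦ o.1.nonoverlined_pos i (Multiset.mem_of_le tsub_le_self hi), by
      have := Multiset.sum_sub_replicate_add_mul o.2
      have := o.1.parts_sum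
      omega⟩
  left_inv o := by ext <;> simp
  right_inv o := Subtype.ext <|
    ext rfl (tsub_add_cancel_of_le (Multiset.le_count_iff_replicate_le.1 o.2))

theorem card_le_count (hd : 0 < d) :
    Fintype.card {o : Overpartition n // t ≤ o.nonoverlined.count d}
      = if t * d ≤ n then pbar (n - t * d) else 0 := by
  split_ifs with h
  · rw [pbar, Nat.card_eq_fintype_card, Fintype.card_congr (addCopies hd h)]
  · exact Fintype.card_eq_zero_iff.2 ⟨fun o ↦ h (mul_le_of_le_count o.1 o.2)⟩

theorem S_eq_sum_range (hd : 0 < d) :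
    S d n = ∑ t ∈ range n, if (t + 1) * d ≤ n then pbar (n - (t + 1) * d) else 0 := by
  have hcount (o : Overpartition n) : o.nonoverlined.count d
      = ∑ t ∈ range n, if t + 1 ≤ o.nonoverlined.count d then 1 else 0 := by
    have hle : o.nonoverlined.count d ≤ n :=
      (Nat.le_mul_of_pos_right _ hd).trans (mul_le_of_le_count o le_rfl)
    rw [← card_filter]
    conv_lhs => rw [← card_range (o.nonoverlined.count d)]
    congr 1
    ext t
    simp only [mem_filter, mem_range]
    omega
  rw [S, finsum_eq_sum_of_fintype, sum_congr rfl fun o _ ↦ hcount o, sum_comm]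
  refine sum_congr rfl fun t _ ↦ ?_
  rw [← card_filter, ← Fintype.card_subtype, card_le_count hd]

theorem S_eq_zero_of_lt (h : n < d) : S d n = 0 := by
  rw [S_eq_sum_range (by omega)]
  exact sum_eq_zero fun t _ ↦ if_neg (by nlinarith)

end Overpartition

theorem coeff_overGF (n : ℕ) : coeff n overGF = pbar n := by
  have hprod := (Nat.Partition.hasProd_powerSeriesMk_card_distincts ℂ).mul
    (Nat.Partition.hasProd_powerSeriesMk_card ℂ)
  have hIcc : ∏ j ∈ Icc 1 n, ((1 + X ^ j) * (1 - X ^ j)⁻¹ : ℂ⟦X⟧)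
      = ∏ i ∈ range n, (1 + X ^ (i + 1)) * (1 - X ^ (i + 1))⁻¹ := by
    rw [range_eq_Ico, prod_Ico_add' (fun j ↦ ((1 + X ^ j) * (1 - X ^ j)⁻¹ : ℂ⟦X⟧)) 0 n 1]
    rfl
  rw [overGF, coeff_mk, hIcc, ← coeff_eq_coeff_prod_of_hasProd hprod n _ fun i hi ↦
    (pow_dvd_pow X (by simpa using hi)).trans (X_pow_dvd_one_add_mul_inv_one_sub_sub_one i),
    coeff_mul, Overpartition.pbar_eq_sum_antidiagonal]
  simp

theorem coeff_overGF_mul_lambert_term {d : ℕ} (hd : 0 < d) (c : ℂ) (n : ℕ) :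
    coeff n (overGF * (C c * X ^ d * (1 - X ^ d)⁻¹)) = S d n * c := by
  rw [mul_assoc, mul_left_comm, coeff_C_mul, coeff_mul_X_pow_mul_inv_one_sub_X_pow hd,
    Overpartition.S_eq_sum_range hd, mul_comm]
  simp [coeff_overGF]

theorem finsum_mem_Ici_one_eq_sum_Icc {M : Type*} [AddCommMonoid M] {f : ℕ → M} {N : ℕ}
    (h : ∀ m, N < m → f m = 0) : ∑ᶠ m ∈ Set.Ici 1, f m = ∑ m ∈ Icc 1 N, f m := by
  refine finsum_mem_eq_sum_of_subset f (fun m ⟨hm, hfm⟩ ↦ ?_) (fun m hm ↦ ?_)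
  · simp only [Set.mem_Ici, coe_Icc, Set.mem_Icc] at hm ⊢
    exact ⟨hm, not_lt.1 fun hNm ↦ hfm (h m hNm)⟩
  · simp only [coe_Icc, Set.mem_Icc, Set.mem_Ici] at hm ⊢
    exact hm.1

theorem le_mul_sub_of_lt {α β m : ℕ} (hβ : β < α) (hm : 1 ≤ m) : m ≤ α * m - β := by
  obtain ⟨k, rfl⟩ : ∃ k, m = k + 1 := ⟨m - 1, by omega⟩
  have : k ≤ α * k := Nat.le_mul_of_pos_left k (by omega)
  rw [mul_add, mul_one]
  omega

theorem coeff_lambertGF {α β : ℕ} (hβ : β < α) (a : ℕ → ℂ) {j N : ℕ} (hj : j ≤ N) :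
    coeff j (lambertGF a α β) = coeff j (∑ m ∈ Icc 1 N,
      C (a m) * X ^ (α * m - β) * (1 - X ^ (α * m - β))⁻¹) := by
  rw [lambertGF, coeff_mk, map_sum]
  refine finsum_mem_Ici_one_eq_sum_Icc fun m hm ↦ ?_
  rw [mul_assoc, coeff_C_mul, coeff_X_pow_mul', if_neg, mul_zero]
  have := le_mul_sub_of_lt hβ (m := m) (by omega)
  omega

theorem stmt4_general (α β : ℕ) (hβ : β < α) (a : ℕ → ℂ) :
    (PowerSeries.mk fun n => if 1 ≤ n then A a α β n else 0)
      = overGF * lambertGF a α β := by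
  have hd (m : ℕ) (hm : 1 ≤ m) : m ≤ α * m - β := le_mul_sub_of_lt hβ hm
  ext n
  have hA : A a α β n = ∑ m ∈ Icc 1 n, (S (α * m - β) n : ℂ) * a m :=
    finsum_mem_Ici_one_eq_sum_Icc fun m hm ↦ by
      rw [Overpartition.S_eq_zero_of_lt (by have := hd m (by omega); omega), Nat.cast_zero,
        zero_mul]
  rw [coeff_mk, coeff_mul_congr_right _ fun j hj ↦ coeff_lambertGF hβ a hj, mul_sum, map_sum,
    sum_congr rfl fun m hm ↦ coeff_overGF_mul_lambert_term
      (by have := (mem_Icc.1 hm).1; have := hd m this; omega) _ n, ← hA]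
  split_ifs with hn
  · rfl
  · obtain rfl : n = 0 := by omega
    simp [hA]

theorem stmt4 (α β : ℕ) (hα : 0 < α) (hβ : β < α) (a : ℕ → ℂ) :
    (PowerSeries.mk fun n => if 1 ≤ n then A a α β n else 0)
      = overGF * lambertGF a α β :=
  stmt4_general α β hβ a
end

section
/- For every positive integer n, ∑_{k=1}^{n} S(k,n)·μ(k) = p̄(n−1), where μ is the Möbius function. Equivalently, the overpartition function satisfies p̄(n) = ∑_{k=1}^{n+1} S(k,n+1)·μ(k) for every nonnegative integer n. -/
/-!
Removing `j` copies of a non-overlined part `k` matches the overpartitions of `n` with at least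
`j` such parts with the overpartitions of `n - j k`; counting pairs (overpartition, `j`) in two
ways gives `S(k, n) = ∑_{j ≥ 1} p̄(n - j k)`. Weighting by `μ(k)` and collecting terms by
`m = j k`, the factor `∑_{d ∣ m} μ(d)` kills every term except `m = 1`, which leaves `p̄(n - 1)`.
-/

open Finset ArithmeticFunction
open scoped ArithmeticFunction.Moebius

lemma sum_Icc_div_mul_eq_sum_filter_dvd {M : Type*} [AddCommMonoid M] (F : ℕ → M) {k : ℕ}
    (hk : 0 < k) (n : ℕ) :
    ∑ j ∈ Icc 1 (n / k), F (j * k) = ∑ m ∈ Icc 1 n with k ∣ m, F m := by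
  refine sum_nbij' (· * k) (· / k) ?_ ?_ ?_ ?_ fun _ _ => rfl
  · intro j hj
    simp only [mem_filter, mem_Icc] at hj ⊢
    exact ⟨⟨Nat.mul_pos hj.1 hk, (Nat.le_div_iff_mul_le hk).1 hj.2⟩, dvd_mul_left k j⟩
  · intro m hm
    simp only [mem_filter, mem_Icc] at hm ⊢
    exact ⟨(Nat.one_le_div_iff hk).2 (Nat.le_of_dvd (by omega) hm.2),
      Nat.div_le_div_right hm.1.2⟩
  · intro j _
    exact Nat.mul_div_cancel j hk
  · intro m hm
    simp only [mem_filter] at hm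
    exact Nat.div_mul_cancel hm.2

lemma sum_divisors_moebius (m : ℕ) : ∑ d ∈ m.divisors, μ d = if m = 1 then 1 else 0 := by
  rw [← coe_mul_zeta_apply, moebius_mul_coe_zeta, one_apply]

theorem sum_Icc_sum_multiples_mul_moebius {R : Type*} [Ring R] (F : ℕ → R) {n : ℕ}
    (hn : 0 < n) :
    ∑ k ∈ Icc 1 n, (∑ j ∈ Icc 1 (n / k), F (j * k)) * μ k = F 1 := by
  calc ∑ k ∈ Icc 1 n, (∑ j ∈ Icc 1 (n / k), F (j * k)) * μ k
      = ∑ k ∈ Icc 1 n, ∑ m ∈ Icc 1 n with k ∣ m, F m * μ k := by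
        refine sum_congr rfl fun k hk => ?_
        rw [sum_Icc_div_mul_eq_sum_filter_dvd F (mem_Icc.1 hk).1, sum_mul]
    _ = ∑ m ∈ Icc 1 n, ∑ k ∈ m.divisors, F m * μ k := by
        refine sum_comm' fun k m => ?_
        simp only [mem_filter, mem_Icc, Nat.mem_divisors]
        constructor
        · rintro ⟨⟨hk, -⟩, ⟨hm, hmn⟩, hkm⟩
          exact ⟨⟨hkm, by omega⟩, hm, hmn⟩
        · rintro ⟨⟨hkm, -⟩, hm, hmn⟩
          have := Nat.le_of_dvd hm hkm
          exact ⟨⟨Nat.pos_of_dvd_of_pos hkm hm, by omega⟩, ⟨hm, hmn⟩, hkm⟩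
    _ = ∑ m ∈ Icc 1 n, F m * (if m = 1 then 1 else 0 : ℤ) := by
        simp only [← mul_sum, ← Int.cast_sum, sum_divisors_moebius]
    _ = F 1 := by
        simp [hn.ne']

lemma Multiset.sum_tsub_replicate_add {s : Multiset ℕ} {j k : ℕ} (h : j ≤ s.count k) :
    (s - Multiset.replicate j k).sum + j * k = s.sum := by
  rw [← smul_eq_mul, ← Multiset.sum_replicate, ← Multiset.sum_add,
    tsub_add_cancel_of_le (Multiset.le_count_iff_replicate_le.1 h)]

attribute [ext] Overpartition

namespace Overpartition

variable {m n j k : ℕ}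

noncomputable instance inst_s6 : Fintype (Overpartition n) := Fintype.ofFinite _

lemma count_nonoverlined_mul_le (o : Overpartition n) (k : ℕ) :
    o.nonoverlined.count k * k ≤ n := by
  have := Multiset.sum_tsub_replicate_add (le_refl (o.nonoverlined.count k))
  have := o.parts_sum
  omega

def addReplicate (o : Overpartition m) (hk : 0 < k) (h : m + j * k = n) : Overpartition n where
  overlined := o.overlined
  nonoverlined := o.nonoverlined + Multiset.replicate j k
  overlined_nodup := o.overlined_nodup
  overlined_pos := o.overlined_pos
  nonoverlined_pos i hi := by
    rcases Multiset.mem_add.1 hi with hi | hi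
    · exact o.nonoverlined_pos i hi
    · rwa [Multiset.eq_of_mem_replicate hi]
  parts_sum := by
    rw [Multiset.sum_add, Multiset.sum_replicate, smul_eq_mul, ← add_assoc, o.parts_sum, h]

def removeReplicate (o : Overpartition n) (hj : j ≤ o.nonoverlined.count k)
    (h : m + j * k = n) : Overpartition m where
  overlined := o.overlined
  nonoverlined := o.nonoverlined - Multiset.replicate j k
  overlined_nodup := o.overlined_nodup
  overlined_pos := o.overlined_pos
  nonoverlined_pos i hi := o.nonoverlined_pos i (Multiset.mem_of_le tsub_le_self hi)
  parts_sum := by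
    have := Multiset.sum_tsub_replicate_add hj
    have := o.parts_sum
    omega

def equivReplicate (hk : 0 < k) (h : m + j * k = n) :
    {o : Overpartition n // j ≤ o.nonoverlined.count k} ≃ Overpartition m where
  toFun o := o.1.removeReplicate o.2 h
  invFun o := ⟨o.addReplicate hk h, by simp [addReplicate]⟩
  left_inv o := by
    ext : 2
    · rfl
    · exact tsub_add_cancel_of_le (Multiset.le_count_iff_replicate_le.1 o.2)
  right_inv o := by
    ext : 1
    · rfl
    · exact add_tsub_cancel_right _ _

lemma card_le_count_eq_pbar (hk : 0 < k) (h : j * k ≤ n) :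
    Nat.card {o : Overpartition n // j ≤ o.nonoverlined.count k} = pbar (n - j * k) :=
  Nat.card_congr (equivReplicate hk (Nat.sub_add_cancel h))

end Overpartition

theorem S_eq_sum_pbar {k : ℕ} (hk : 0 < k) (n : ℕ) :
    S k n = ∑ j ∈ Icc 1 (n / k), pbar (n - j * k) := by
  classical
  have hcount (o : Overpartition n) :
      o.nonoverlined.count k = #{j ∈ Icc 1 (n / k) | j ≤ o.nonoverlined.count k} := by
    have hle := (Nat.le_div_iff_mul_le hk).2 (o.count_nonoverlined_mul_le k)
    generalize o.nonoverlined.count k = c at hle ⊢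
    rw [show {j ∈ Icc 1 (n / k) | j ≤ c} = Icc 1 c by ext j; simp only [mem_filter, mem_Icc]; omega,
      Nat.card_Icc, Nat.add_sub_cancel]
  calc S k n = ∑ o : Overpartition n, o.nonoverlined.count k := finsum_eq_sum_of_fintype _
    _ = ∑ o : Overpartition n, #{j ∈ Icc 1 (n / k) | j ≤ o.nonoverlined.count k} :=
        sum_congr rfl fun o _ => hcount o
    _ = ∑ j ∈ Icc 1 (n / k), #{o : Overpartition n | j ≤ o.nonoverlined.count k} := by
        simp only [card_filter]
        exact sum_comm
    _ = ∑ j ∈ Icc 1 (n / k), pbar (n - j * k) := by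
        refine sum_congr rfl fun j hj => ?_
        have hjk := (Nat.le_div_iff_mul_le hk).1 (mem_Icc.1 hj).2
        rw [← Overpartition.card_le_count_eq_pbar hk hjk, Nat.card_eq_fintype_card,
          Fintype.card_subtype]

theorem sum_S_mul_moebius {n : ℕ} (hn : 0 < n) :
    ∑ k ∈ Icc 1 n, (S k n : ℤ) * μ k = pbar (n - 1) := by
  calc ∑ k ∈ Icc 1 n, (S k n : ℤ) * μ k
      = ∑ k ∈ Icc 1 n, (∑ j ∈ Icc 1 (n / k), (pbar (n - j * k) : ℤ)) * μ k := by
        refine sum_congr rfl fun k hk => ?_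
        rw [S_eq_sum_pbar (mem_Icc.1 hk).1, Nat.cast_sum]
    _ = pbar (n - 1) := sum_Icc_sum_multiples_mul_moebius (fun m => (pbar (n - m) : ℤ)) hn

open ArithmeticFunction in
theorem stmt6 :
    (∀ n : ℕ, 0 < n →
      ∑ k ∈ Finset.Icc 1 n, (S k n : ℤ) * moebius k = (pbar (n - 1) : ℤ)) ∧
    (∀ n : ℕ,
      (pbar n : ℤ) = ∑ k ∈ Finset.Icc 1 (n + 1), (S k (n + 1) : ℤ) * moebius k) :=
  ⟨fun _ hn => sum_S_mul_moebius hn, fun n => (sum_S_mul_moebius n.succ_pos).symm⟩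
end
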